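/- arXiv:1309.0535 — 2 statements merged into one kernel-verified Lean document; each statement's English description precedes it below -/
import Mathlib

section
/- The symmetric rigidity matrix of a weighted framework in R^3 is similar, via a permutation of rows and columns, to the weighted-Laplacian-like matrix (I_3 ⊗ E(G)W) Q(p) (I_3 ⊗ W E(G)^T), where Q(p) is the 3m×3m block matrix with (s,t) block Q_s Q_t for s,t ∈ {x,y,z}. -/
open Matrix

/-- The rigidity matrix of a framework in ℝ³. -/
noncomputable def rigidityMatrix (n m : ℕ) (u v : Fin m → Fin n)
    (p : Fin n → Fin 3 → ℝ) : Matrix (Fin m) (Fin n × Fin 3) ℝ :=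
  Matrix.of fun k is =>
    if is.1 = u k then p (u k) is.2 - p (v k) is.2
    else if is.1 = v k then p (v k) is.2 - p (u k) is.2
    else 0

/-- The weighted rigidity matrix `R(p,W) = W ⬝ R(p)`. -/
noncomputable def weightedRigidityMatrix (n m : ℕ) (u v : Fin m → Fin n)
    (p : Fin n → Fin 3 → ℝ) (w : Fin m → ℝ) : Matrix (Fin m) (Fin n × Fin 3) ℝ :=
  Matrix.diagonal w * rigidityMatrix n m u v p

/-- Oriented incidence matrix of the graph with edge `k` directed from `u k` to `v k`. -/
noncomputable def incidence (n m : ℕ) (u v : Fin m → Fin n) : Matrix (Fin n) (Fin m) ℝ :=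
  Matrix.of fun i k => if i = u k then 1 else if i = v k then -1 else 0

/-- `[Q_s]_{kk} = p_i^s - p_j^s` for edge `e_k = (v_i, v_j)`. -/
noncomputable def edgeDiff (n m : ℕ) (u v : Fin m → Fin n) (p : Fin n → Fin 3 → ℝ)
    (s : Fin 3) (k : Fin m) : ℝ := p (u k) s - p (v k) s

/-- The weighted-Laplacian-like matrix `(I₃ ⊗ E(G)W) Q(p) (I₃ ⊗ W E(G)ᵀ)`, where the
`(s,t)` block of `Q(p)` is the diagonal matrix `Q_s Q_t`. -/
noncomputable def weightedLapForm (n m : ℕ) (u v : Fin m → Fin n)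
    (p : Fin n → Fin 3 → ℝ) (w : Fin m → ℝ) :
    Matrix (Fin 3 × Fin n) (Fin 3 × Fin n) ℝ :=
  Matrix.of fun si tj => ∑ k : Fin m,
    (incidence n m u v si.2 k * w k) *
      (edgeDiff n m u v p si.1 k * edgeDiff n m u v p tj.1 k) *
        (w k * incidence n m u v tj.2 k)

lemma rigidityMatrix_apply (n m : ℕ) (u v : Fin m → Fin n) (p : Fin n → Fin 3 → ℝ)
    (k : Fin m) (i : Fin n) (s : Fin 3) :
    rigidityMatrix n m u v p k (i, s) = incidence n m u v i k * edgeDiff n m u v p s k := by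
  by_cases hu : i = u k <;> by_cases hv : i = v k <;>
    simp [rigidityMatrix, incidence, edgeDiff, hu, hv]

lemma weightedRigidityMatrix_apply (n m : ℕ) (u v : Fin m → Fin n)
    (p : Fin n → Fin 3 → ℝ) (w : Fin m → ℝ) (k : Fin m) (i : Fin n) (s : Fin 3) :
    weightedRigidityMatrix n m u v p w k (i, s) =
      w k * incidence n m u v i k * edgeDiff n m u v p s k := by
  rw [weightedRigidityMatrix, diagonal_mul, rigidityMatrix_apply, mul_assoc]

/-- The symmetric rigidity matrix `𝓡 = R(p,W)ᵀ R(p,W)` of a weighted framework in ℝ³ is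
similar, via the permutation `P` of rows and columns collecting first the `x`, then the
`y`, then the `z` coordinates, to `(I₃ ⊗ E(G)W) Q(p) (I₃ ⊗ W E(G)ᵀ)`:
`P 𝓡 Pᵀ = (I₃ ⊗ E(G)W) Q(p) (I₃ ⊗ W E(G)ᵀ)`. -/
theorem symRigidity_permuted_eq_weightedLapForm
    (n m : ℕ) (u v : Fin m → Fin n) (p : Fin n → Fin 3 → ℝ) (w : Fin m → ℝ) :
    ((weightedRigidityMatrix n m u v p w)ᵀ * weightedRigidityMatrix n m u v p w).submatrix
        (fun si : Fin 3 × Fin n => (si.2, si.1)) (fun tj : Fin 3 × Fin n => (tj.2, tj.1))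
      = weightedLapForm n m u v p w := by
  ext ⟨s, i⟩ ⟨t, j⟩
  simp only [submatrix_apply, mul_apply, transpose_apply, weightedLapForm, of_apply,
    weightedRigidityMatrix_apply]
  exact Finset.sum_congr rfl fun k _ => by ring
end

section
/- In the power-iteration estimator dynamics v̇ = −(k_1 T T^T + k_2 𝓡 + k_3 (v^T v / (3n) − 1) I) v, if the initial condition has ‖v(t_0)‖ ≤ max{‖v(t_0)‖, √(3n)}, then ‖v(t)‖ ≤ max{‖v(t_0)‖, √(3n)} for all t ≥ t_0, for any positive gains k_1, k_2, k_3. -/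
/-!
Along a solution, `d/dt ‖v‖² = 2 v ⬝ v̇ = -2 (k₁ ‖Tᵀ v‖² + k₂ vᵀ𝓡 v + k₃ (‖v‖²/(3n) - 1) ‖v‖²)`,
and every term in the bracket is nonnegative once `‖v‖² ≥ 3n`. So `‖v‖²` cannot increase while
it is at least `3n`, and a barrier argument keeps it below `max (‖v(t₀)‖², 3n)`.
-/

open Matrix Set Filter Topology

section DotProduct

variable {ι : Type*} [Fintype ι]

theorem HasDerivAt.dotProduct {f g : ℝ → ι → ℝ} {f' g' : ι → ℝ} {t : ℝ}
    (hf : HasDerivAt f f' t) (hg : HasDerivAt g g' t) :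
    HasDerivAt (fun s => f s ⬝ᵥ g s) (f' ⬝ᵥ g t + f t ⬝ᵥ g') t := by
  have hsum := HasDerivAt.fun_sum (u := Finset.univ) fun i _ =>
    (hasDerivAt_pi.1 hf i).fun_mul (hasDerivAt_pi.1 hg i)
  rwa [Finset.sum_add_distrib] at hsum

theorem HasDerivAt.dotProduct_self {v : ℝ → ι → ℝ} {v' : ι → ℝ} {t : ℝ}
    (hv : HasDerivAt v v' t) : HasDerivAt (fun s => v s ⬝ᵥ v s) (2 * (v t ⬝ᵥ v')) t := by
  simpa only [dotProduct_comm v', two_mul] using hv.dotProduct hv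

end DotProduct

theorem image_le_max_of_deriv_right_nonpos_of_le {f f' : ℝ → ℝ} {a b c : ℝ}
    (hf : ContinuousOn f (Icc a b)) (hf' : ∀ x ∈ Ico a b, HasDerivWithinAt f (f' x) (Ici x) x)
    (hneg : ∀ x ∈ Ico a b, c ≤ f x → f' x ≤ 0) :
    ∀ ⦃x⦄, x ∈ Icc a b → f x ≤ max (f a) c := by
  intro x hx
  -- Fence `f` by the lines `max (f a) c + ε (y - a)` and let `ε → 0⁺`.
  have hfence : ∀ ε > 0, f x ≤ max (f a) c + ε * (x - a) := by
    intro ε hε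
    have hline (y : ℝ) : HasDerivAt (fun y => max (f a) c + ε * (y - a)) ε y := by
      simpa using (((hasDerivAt_id' y).sub_const a).const_mul ε).const_add (max (f a) c)
    refine image_le_of_deriv_right_lt_deriv_boundary hf hf' (by simp) hline ?_ hx
    intro y hy hfy
    have hline_pos : 0 ≤ ε * (y - a) := mul_nonneg hε.le (sub_nonneg.2 hy.1)
    exact (hneg y hy (by linarith [le_max_right (f a) c])).trans_lt hε
  have hlim : Tendsto (fun ε : ℝ => max (f a) c + ε * (x - a)) (𝓝[>] 0) (𝓝 (max (f a) c)) :=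
    tendsto_nhdsWithin_of_tendsto_nhds <|
      (by fun_prop : Continuous fun ε : ℝ => max (f a) c + ε * (x - a)).tendsto' 0 _ (by simp)
  exact ge_of_tendsto hlim (eventually_nhdsWithin_of_forall hfence)

section PowerIteration

variable {m k : Type*} [Fintype m] [Fintype k]

theorem dotProduct_mulVec_mul_transpose_self_nonneg (T : Matrix m k ℝ) (x : m → ℝ) :
    0 ≤ x ⬝ᵥ (T * Tᵀ) *ᵥ x := by
  simpa using (posSemidef_self_mul_conjTranspose T).dotProduct_mulVec_nonneg x

theorem dotProduct_power_iteration_field_nonpos (R : Matrix m m ℝ) (T : Matrix m k ℝ)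
    (hpsd : ∀ x : m → ℝ, 0 ≤ x ⬝ᵥ R *ᵥ x)
    {k1 k2 k3 N : ℝ} (hk1 : 0 ≤ k1) (hk2 : 0 ≤ k2) (hk3 : 0 ≤ k3) (hN : 0 < N)
    {v : m → ℝ} (hv : N ≤ v ⬝ᵥ v) :
    v ⬝ᵥ -(k1 • (T * Tᵀ) *ᵥ v + k2 • R *ᵥ v + (k3 * ((v ⬝ᵥ v) / N - 1)) • v) ≤ 0 := by
  have hT := dotProduct_mulVec_mul_transpose_self_nonneg T v
  have hR := hpsd v
  have hradial : 0 ≤ (v ⬝ᵥ v) / N - 1 := by rwa [sub_nonneg, one_le_div hN]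
  simp only [dotProduct_neg, dotProduct_add, dotProduct_smul, smul_eq_mul, neg_nonpos]
  linarith [mul_nonneg hk1 hT, mul_nonneg hk2 hR,
    mul_nonneg (mul_nonneg hk3 hradial) (hN.le.trans hv)]

end PowerIteration

theorem power_iteration_norm_bound_general
    (n : ℕ) (R : Matrix (Fin (3 * n)) (Fin (3 * n)) ℝ) (T : Matrix (Fin (3 * n)) (Fin 6) ℝ)
    (hpsd : ∀ x : Fin (3 * n) → ℝ, 0 ≤ x ⬝ᵥ R.mulVec x)
    (k1 k2 k3 : ℝ) (hk1 : 0 < k1) (hk2 : 0 < k2) (hk3 : 0 < k3)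
    (v : ℝ → (Fin (3 * n) → ℝ)) (t0 : ℝ)
    (hode : ∀ t : ℝ, HasDerivAt v
      (-(k1 • (T * Tᵀ).mulVec (v t) + k2 • R.mulVec (v t) +
          (k3 * ((v t ⬝ᵥ v t) / ((3 * n : ℕ) : ℝ) - 1)) • v t)) t) :
    ∀ t : ℝ, t0 ≤ t →
      Real.sqrt (v t ⬝ᵥ v t) ≤
        max (Real.sqrt (v t0 ⬝ᵥ v t0)) (Real.sqrt ((3 * n : ℕ) : ℝ)) := by
  intro t ht
  -- For `n = 0` the radial term divides by zero, but the state space is trivial.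
  rcases Nat.eq_zero_or_pos n with rfl | hn
  · simp [dotProduct]
  have hsq : v t ⬝ᵥ v t ≤ max (v t0 ⬝ᵥ v t0) ((3 * n : ℕ) : ℝ) :=
    image_le_max_of_deriv_right_nonpos_of_le
      (fun s _ => (hode s).dotProduct_self.continuousAt.continuousWithinAt)
      (fun s _ => (hode s).dotProduct_self.hasDerivWithinAt)
      (fun s _ hs => mul_nonpos_of_nonneg_of_nonpos zero_le_two
        (dotProduct_power_iteration_field_nonpos R T hpsd hk1.le hk2.le hk3.le (by positivity) hs))
      ⟨ht, le_rfl⟩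
  calc Real.sqrt (v t ⬝ᵥ v t) ≤ Real.sqrt (max (v t0 ⬝ᵥ v t0) ((3 * n : ℕ) : ℝ)) :=
        Real.sqrt_le_sqrt hsq
    _ = max (Real.sqrt (v t0 ⬝ᵥ v t0)) (Real.sqrt ((3 * n : ℕ) : ℝ)) :=
        Real.sqrt_monotone.map_max

/-- Norm boundedness of the power-iteration estimator dynamics
`v̇ = −(k₁ T Tᵀ + k₂ 𝓡 + k₃ (vᵀv/(3n) − 1) I) v`: for any positive gains
`k₁, k₂, k₃` and any solution, `‖v(t)‖ ≤ max{‖v(t₀)‖, √(3n)}` for all `t ≥ t₀`. -/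
theorem power_iteration_norm_bound
    (n : ℕ) (R : Matrix (Fin (3 * n)) (Fin (3 * n)) ℝ) (T : Matrix (Fin (3 * n)) (Fin 6) ℝ)
    (hsym : R.IsSymm) (hpsd : ∀ x : Fin (3 * n) → ℝ, 0 ≤ x ⬝ᵥ R.mulVec x)
    (k1 k2 k3 : ℝ) (hk1 : 0 < k1) (hk2 : 0 < k2) (hk3 : 0 < k3)
    (v : ℝ → (Fin (3 * n) → ℝ)) (t0 : ℝ)
    (hode : ∀ t : ℝ, HasDerivAt v
      (-(k1 • (T * Tᵀ).mulVec (v t) + k2 • R.mulVec (v t) +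
          (k3 * ((v t ⬝ᵥ v t) / ((3 * n : ℕ) : ℝ) - 1)) • v t)) t) :
    ∀ t : ℝ, t0 ≤ t →
      Real.sqrt (v t ⬝ᵥ v t) ≤
        max (Real.sqrt (v t0 ⬝ᵥ v t0)) (Real.sqrt ((3 * n : ℕ) : ℝ)) :=
  power_iteration_norm_bound_general n R T hpsd k1 k2 k3 hk1 hk2 hk3 v t0 hode
end
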